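/- arXiv:2209.08673 — 2 statements merged into one kernel-verified Lean document; each statement's English description precedes it below -/
import Mathlib

section
/- For an injective hash function, Merkle verification is sound: if a proof π verifies leaf value v at index i against the root of the Merkle tree built from list D, then v = D[i]. -/
/-! Induction on the depth. The top bit of `i` decides in which half of the tree the leaf
lies, and below the top level the verification fold only reads the low bits of `i`, so it
is the fold for the index of the leaf inside that half; injectivity of `Hp` then matches the
fold against the root of that half. -/

variable {α β : Type*}

/-- Root of a complete binary Merkle tree of depth `d` over leaves `D`. -/
def mroot (Hl : α → β) (Hp : β → β → β) : (d : ℕ) → (Fin (2 ^ d) → α) → β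
  | 0, D => Hl (D ⟨0, by norm_num⟩)
  | d + 1, D =>
      Hp (mroot Hl Hp d (fun i => D ⟨i.val, by have := i.isLt; simp [pow_succ]; omega⟩))
         (mroot Hl Hp d (fun i => D ⟨2 ^ d + i.val, by have := i.isLt; simp [pow_succ]; omega⟩))

/-- Merkle verification fold: `mfold Hl Hp v π i t` is `h_{t+1}` in the paper's notation. -/
def mfold (Hl : α → β) (Hp : β → β → β) (v : α) (π : ℕ → β) (i : ℕ) : ℕ → β
  | 0 => Hl v
  | t + 1 =>
      if Nat.testBit i t then Hp (π t) (mfold Hl Hp v π i t)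
      else Hp (mfold Hl Hp v π i t) (π t)

/-- Root of the depth-`k` subtree whose leaves are `D[j·2^k], …, D[(j+1)·2^k − 1]`. -/
def subRoot (Hl : α → β) (Hp : β → β → β) (d k : ℕ) (hk : k ≤ d)
    (D : Fin (2 ^ d) → α) (j : Fin (2 ^ (d - k))) : β :=
  mroot Hl Hp k (fun i => D ⟨j.val * 2 ^ k + i.val, by
    have h1 := j.isLt; have h2 := i.isLt
    calc j.val * 2 ^ k + i.val < (j.val + 1) * 2 ^ k := by nlinarith
    _ ≤ 2 ^ (d - k) * 2 ^ k := by exact Nat.mul_le_mul_right _ (by omega)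
    _ = 2 ^ d := by rw [← pow_add]; congr 1; omega⟩)

section

variable {Hl : α → β} {Hp : β → β → β} {v : α} {π : ℕ → β}

theorem mfold_congr_of_testBit {i j : ℕ} :
    ∀ {t : ℕ}, (∀ s < t, i.testBit s = j.testBit s) →
      mfold Hl Hp v π i t = mfold Hl Hp v π j t
  | 0, _ => rfl
  | t + 1, h => by
    simp only [mfold, h t t.lt_succ_self,
      mfold_congr_of_testBit fun s hs => h s (Nat.lt_succ_of_lt hs)]

theorem mfold_succ_of_lt {i d : ℕ} (hi : i < 2 ^ d) :
    mfold Hl Hp v π i (d + 1) = Hp (mfold Hl Hp v π i d) (π d) := by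
  simp [mfold, Nat.testBit_lt_two_pow hi]

theorem mfold_two_pow_add_succ {i d : ℕ} (hi : i < 2 ^ d) :
    mfold Hl Hp v π (2 ^ d + i) (d + 1) = Hp (π d) (mfold Hl Hp v π i d) := by
  rw [mfold, Nat.testBit_two_pow_add_eq, Nat.testBit_lt_two_pow hi, Bool.not_false,
    if_pos rfl, mfold_congr_of_testBit fun s hs => Nat.testBit_two_pow_add_gt hs i]

theorem eq_of_mfold_eq_mroot (hHl : Function.Injective Hl)
    (hHp : Function.Injective fun p : β × β => Hp p.1 p.2) :
    ∀ {d : ℕ} (D : Fin (2 ^ d) → α) (i : Fin (2 ^ d)),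
      mfold Hl Hp v π i d = mroot Hl Hp d D → v = D i
  | 0, D, i, h => by
    obtain rfl : i = ⟨0, Nat.one_pos⟩ := Fin.ext (by simp)
    exact hHl h
  | d + 1, D, i, h => by
    have hHp' {a b c e : β} (h : Hp a b = Hp c e) : a = c ∧ b = e :=
      Prod.ext_iff.mp (hHp (a₁ := (a, b)) (a₂ := (c, e)) h)
    rw [mroot] at h
    by_cases hi : i.val < 2 ^ d
    · rw [mfold_succ_of_lt hi] at h
      exact eq_of_mfold_eq_mroot hHl hHp _ ⟨i, hi⟩ (hHp' h).1
    · obtain ⟨j, hj⟩ : ∃ j, i.val = 2 ^ d + j := Nat.exists_eq_add_of_le (not_lt.mp hi)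
      have hj_lt : j < 2 ^ d := by have := i.isLt; have := pow_succ 2 d; omega
      rw [hj, mfold_two_pow_add_succ hj_lt] at h
      have := eq_of_mfold_eq_mroot hHl hHp _ ⟨j, hj_lt⟩ (hHp' h).2
      convert this using 2
      exact Fin.ext hj

end

/-- **Soundness of Merkle verification.** For injective hash functions, if a proof `π`
verifies leaf value `v` at index `i` against the root of the Merkle tree built from
`D`, then `v = D[i]`. -/
theorem merkle_verification_sound (Hl : α → β) (Hp : β → β → β)
    (hHl : Function.Injective Hl)
    (hHp : Function.Injective fun p : β × β => Hp p.1 p.2)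
    (d : ℕ) (D : Fin (2 ^ d) → α) (v : α) (π : ℕ → β) (i : Fin (2 ^ d))
    (hver : mfold Hl Hp v π i.val d = mroot Hl Hp d D) :
    v = D i :=
  eq_of_mfold_eq_mroot hHl hHp D i hver
end

section
/- Merkle verification is complete: for any list D of 2^d leaves and any index i, the proof consisting of the sibling hashes along the path from leaf i to the root verifies the value D[i] against the Merkle root of D. -/
variable {α β : Type*}

/-- The canonical sibling-hash inclusion proof for leaf `i`: its `t`-th entry is the
root of the depth-`t` subtree that is the sibling of the depth-`t` subtree
containing leaf `i` (junk beyond level `d`). -/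
def siblingProof (Hl : α → β) (Hp : β → β → β) (d : ℕ) (D : Fin (2 ^ d) → α)
    (i : Fin (2 ^ d)) (t : ℕ) : β :=
  if h : t < d then
    subRoot Hl Hp d t (le_of_lt h) D ⟨(i.val / 2 ^ t) ^^^ 1, by
      have h1 : i.val / 2 ^ t < 2 ^ (d - t) := by
        apply Nat.div_lt_of_lt_mul
        calc i.val < 2 ^ d := i.isLt
        _ = 2 ^ t * 2 ^ (d - t) := by rw [← pow_add]; congr 1; omega
      have h2 : 1 < 2 ^ (d - t) := by
        have : 1 ≤ d - t := by omega
        calc 1 < 2 ^ 1 := by norm_num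
        _ ≤ 2 ^ (d - t) := Nat.pow_le_pow_right (by norm_num) this
      exact Nat.xor_lt_two_pow h1 h2⟩
  else Hl (D ⟨0, by positivity⟩)

/-! By induction on `t`, after `t` folding steps the verifier holds the root of the depth-`t`
subtree containing leaf `i`, i.e. block `i / 2 ^ t`. Bit `t` of `i` is the parity of that block,
so it says whether the block is a right or a left child, and the `t`-th proof entry is the root of
its sibling block `(i / 2 ^ t) ^^^ 1`; hashing the two in that order gives block `i / 2 ^ (t + 1)`.
At `t = d` the block is the whole tree. -/

theorem Nat.div_two_pow_lt_two_pow_sub {n d t : ℕ} (hn : n < 2 ^ d) (ht : t ≤ d) :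
    n / 2 ^ t < 2 ^ (d - t) :=
  Nat.div_lt_of_lt_mul (by rwa [← pow_add, Nat.add_sub_cancel' ht])

theorem Nat.div_two_pow_xor_one_lt_two_pow_sub {n d t : ℕ} (hn : n < 2 ^ d) (ht : t < d) :
    (n / 2 ^ t) ^^^ 1 < 2 ^ (d - t) :=
  Nat.xor_lt_two_pow (Nat.div_two_pow_lt_two_pow_sub hn ht.le) (Nat.one_lt_two_pow (by omega))

theorem Nat.xor_one_eq_ite (n : ℕ) :
    n ^^^ 1 = if n % 2 = 1 then 2 * (n / 2) else 2 * (n / 2) + 1 := by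
  split_ifs with h
  · rw [Nat.xor_one_of_odd (Nat.odd_iff.mpr h)]; omega
  · rw [Nat.xor_one_of_even (Nat.even_iff.mpr (by omega))]; omega

section subRoot

variable (Hl : α → β) (Hp : β → β → β) {d : ℕ} (D : Fin (2 ^ d) → α)

theorem subRoot_zero (j : Fin (2 ^ (d - 0))) (x : Fin (2 ^ d)) (hx : x.val = j.val) :
    subRoot Hl Hp d 0 (Nat.zero_le d) D j = Hl (D x) := by
  simp only [subRoot, mroot]
  congr
  simp [hx]

theorem subRoot_self (j : Fin (2 ^ (d - d))) :
    subRoot Hl Hp d d le_rfl D j = mroot Hl Hp d D := by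
  have hj : j.val = 0 := by simpa using j.isLt
  simp only [subRoot, hj, zero_mul, zero_add]

theorem subRoot_succ {k : ℕ} (hk : k + 1 ≤ d) (j : Fin (2 ^ (d - (k + 1))))
    (l r : Fin (2 ^ (d - k))) (hl : l.val = 2 * j.val) (hr : r.val = 2 * j.val + 1) :
    subRoot Hl Hp d (k + 1) hk D j =
      Hp (subRoot Hl Hp d k (by omega) D l) (subRoot Hl Hp d k (by omega) D r) := by
  simp only [subRoot, mroot]
  congr 1 <;> congr 1 <;> funext x <;> congr 1 <;> ext <;> simp only [hl, hr, pow_succ] <;> ring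

theorem subRoot_succ_eq_ite {k : ℕ} (hk : k + 1 ≤ d) (n s : Fin (2 ^ (d - k)))
    (hs : s.val = n.val ^^^ 1) (p : Fin (2 ^ (d - (k + 1)))) (hp : p.val = n.val / 2) :
    subRoot Hl Hp d (k + 1) hk D p =
      if n.val % 2 = 1 then Hp (subRoot Hl Hp d k (by omega) D s) (subRoot Hl Hp d k (by omega) D n)
      else Hp (subRoot Hl Hp d k (by omega) D n) (subRoot Hl Hp d k (by omega) D s) := by
  rw [Nat.xor_one_eq_ite] at hs
  split_ifs at hs ⊢ with h
  · exact subRoot_succ Hl Hp D hk p s n (by omega) (by omega)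
  · exact subRoot_succ Hl Hp D hk p n s (by omega) (by omega)

theorem siblingProof_of_lt (i : Fin (2 ^ d)) {t : ℕ} (ht : t < d) :
    siblingProof Hl Hp d D i t = subRoot Hl Hp d t ht.le D
      ⟨(i.val / 2 ^ t) ^^^ 1, Nat.div_two_pow_xor_one_lt_two_pow_sub i.isLt ht⟩ := by
  rw [siblingProof, dif_pos ht]

theorem mfold_siblingProof_eq_subRoot (i : Fin (2 ^ d)) (t : ℕ) (ht : t ≤ d) :
    mfold Hl Hp (D i) (siblingProof Hl Hp d D i) i.val t =
      subRoot Hl Hp d t ht D ⟨i.val / 2 ^ t, Nat.div_two_pow_lt_two_pow_sub i.isLt ht⟩ := by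
  induction t with
  | zero => exact (subRoot_zero Hl Hp D _ i (by simp)).symm
  | succ t ih =>
    have htd : t < d := by omega
    have hparent : i.val / 2 ^ (t + 1) = i.val / 2 ^ t / 2 := by
      rw [pow_succ, Nat.div_div_eq_div_mul]
    rw [subRoot_succ_eq_ite Hl Hp D ht
        ⟨i.val / 2 ^ t, Nat.div_two_pow_lt_two_pow_sub i.isLt htd.le⟩
        ⟨(i.val / 2 ^ t) ^^^ 1, Nat.div_two_pow_xor_one_lt_two_pow_sub i.isLt htd⟩
        rfl _ hparent,
      mfold, Nat.testBit_eq_decide_div_mod_eq, ih htd.le,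
      siblingProof_of_lt Hl Hp D i htd]
    simp only [decide_eq_true_eq]

end subRoot

/-- **Completeness of Merkle verification.** For any list `D` of `2 ^ d` leaves and
any index `i`, the proof consisting of the sibling hashes along the path from leaf `i`
to the root verifies the value `D[i]` against the Merkle root of `D`. -/
theorem merkle_verification_complete (Hl : α → β) (Hp : β → β → β)
    (d : ℕ) (D : Fin (2 ^ d) → α) (i : Fin (2 ^ d)) :
    mfold Hl Hp (D i) (siblingProof Hl Hp d D i) i.val d = mroot Hl Hp d D := by
  rw [mfold_siblingProof_eq_subRoot Hl Hp D i d le_rfl, subRoot_self]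
end
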